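/- Smoothing lemma: Fix an integer k > 1 and let S_k f(x) denote the average of f over the lattice ball B(x,k) ∩ ℤ^d. For the rotor aggregation odometer u = u_n and any x with B(x,k) ∩ ℤ^d ⊆ R_n \ {0}, one has (1/2d)ΔS_k u(x) = 1 + O(1/k), where the implied constant depends only on d. -/

import Mathlib

/-- The lattice `ℤᵈ`. -/
abbrev Vd (d : ℕ) := Fin d → ℤ

/-- The neighbor of `x` in direction `j = (i, b)`: `x + eᵢ` if `b`, else `x − eᵢ`. -/
def nbr {d : ℕ} (x : Vd d) (j : Fin d × Bool) : Vd d :=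
  if j.2 then x + Pi.single j.1 1 else x - Pi.single j.1 1

/-- The graph Laplacian on `ℤᵈ`: `Δf(x) = Σ_{y ∼ x} (f(y) − f(x))`. -/
def lapd {d : ℕ} (f : Vd d → ℝ) (x : Vd d) : ℝ :=
  ∑ j : Fin d × Bool, (f (nbr x j) - f x)

/-- A configuration during rotor aggregation: the rotor directions (as indices into each
vertex's periodic mechanism), the set of occupied sites, and the current walker (if any). -/
structure RConf (d : ℕ) where
  rotors : Vd d → ZMod (2 * d)
  occ : Finset (Vd d)
  walker : Option (Vd d)

/-- One step of rotor aggregation with mechanism `mech`: launch a new particle at the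
origin, settle the walker at an unoccupied site, or advance the rotor at the walker's
(occupied) site and move the walker to the neighbor it now points to. -/
inductive RStep {d : ℕ} (mech : Vd d → ZMod (2 * d) → Fin d × Bool) :
    RConf d → RConf d → Prop
  | launch (c : RConf d) (h : c.walker = none) :
      RStep mech c ⟨c.rotors, c.occ, some 0⟩
  | settle (c : RConf d) (p : Vd d) (h : c.walker = some p) (hp : p ∉ c.occ) :
      RStep mech c ⟨c.rotors, insert p c.occ, none⟩
  | move (c : RConf d) (p : Vd d) (h : c.walker = some p) (hp : p ∈ c.occ) :
      RStep mech c ⟨Function.update c.rotors p (c.rotors p + 1), c.occ,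
        some (nbr p (mech p (c.rotors p + 1)))⟩

/-- A complete execution of rotor aggregation of `n` particles started at the origin of
`ℤᵈ`, with rotor mechanism `mech` and initial rotor configuration `r₀`. -/
structure RotorExec (d n : ℕ) (mech : Vd d → ZMod (2 * d) → Fin d × Bool)
    (r₀ : Vd d → ZMod (2 * d)) where
  T : ℕ
  conf : ℕ → RConf d
  init : conf 0 = ⟨r₀, ∅, none⟩
  step : ∀ i < T, RStep mech (conf i) (conf (i + 1))
  walker_final : (conf T).walker = none
  card_final : (conf T).occ.card = n

/-- A rotor mechanism is simple if each of the `2d` neighbors occurs exactly once per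
period. -/
def SimpleMech {d : ℕ} (mech : Vd d → ZMod (2 * d) → Fin d × Bool) : Prop :=
  ∀ v, Function.Bijective (mech v)

variable {d n : ℕ} {mech : Vd d → ZMod (2 * d) → Fin d × Bool} {r₀ : Vd d → ZMod (2 * d)}

/-- The final cluster `Rₙ` of occupied sites. -/
def RotorExec.cluster (E : RotorExec d n mech r₀) : Finset (Vd d) := (E.conf E.T).occ

/-- The odometer: total number of exits from `x` by all particles. -/
def RotorExec.u (E : RotorExec d n mech r₀) (x : Vd d) : ℕ :=
  ((Finset.range E.T).filter
    (fun i => (E.conf i).walker = some x ∧ x ∈ (E.conf i).occ)).card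

/-- `N(x,y)`: total number of particle moves from `x` to `y`. -/
def RotorExec.N (E : RotorExec d n mech r₀) (x y : Vd d) : ℕ :=
  ((Finset.range E.T).filter (fun i => (E.conf i).walker = some x ∧
    x ∈ (E.conf i).occ ∧ (E.conf (i + 1)).walker = some y)).card

/-- `θ(x,y) = N(x,y) − N(y,x)`: net number of crossings of the directed edge `(x,y)`. -/
def RotorExec.theta (E : RotorExec d n mech r₀) (x y : Vd d) : ℤ :=
  (E.N x y : ℤ) - (E.N y x : ℤ)

/-- The squared Euclidean norm of a lattice point (an integer). -/
def inorm2 {d : ℕ} (x : Vd d) : ℤ := ∑ i, (x i) ^ 2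

/-- The lattice ball `B(x,k) ∩ ℤᵈ` of Euclidean radius `k` about `x`. -/
noncomputable def dball {d : ℕ} (x : Vd d) (k : ℕ) : Finset (Vd d) :=
  (Finset.Icc (x - fun _ => (k : ℤ)) (x + fun _ => (k : ℤ))).filter
    (fun y => inorm2 (y - x) < (k : ℤ) ^ 2)

/-- The average of `f` over the lattice ball `B(x,k) ∩ ℤᵈ`. -/
noncomputable def Sk {d : ℕ} (k : ℕ) (f : Vd d → ℝ) (x : Vd d) : ℝ :=
  (∑ y ∈ dball x k, f y) / (dball x k).card

/-!
At a site `y ∈ Rₙ ∖ {0}` exactly one particle settles, so the particles arriving at `y` outnumber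
those leaving it by one: `∑ⱼ θ(y + eⱼ, y) = 1`. A simple rotor sends the exits from `y`
round-robin to its `2d` neighbours, so `2d·N(y, y + eⱼ) = u(y) + α(y, j)` with `|α| ≤ 2d`, and
therefore `Δu(y) = 2d + ∑ⱼ (α(y, j) - α(y + eⱼ, -j))`. Since `Δ` commutes with `Sₖ`, `ΔSₖu(x)` is
the average of `Δu` over `B = B(x, k)`; summing over `B`, the `α`-terms of edges inside `B` cancel in
pairs, and each of the remaining edges, which leave `B` from the shell `B(x, k) ∖ B(x, k - 1)`,
contributes at most `4d`. Comparing lattice point counts with volumes of Euclidean balls of radii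
`k ± √d` shows that the shell holds a fraction `O(1/k)` of the points of `B`.
-/

lemma pow_sub_pow_le_div_mul_pow {s K : ℝ} (n : ℕ) (hs : 0 ≤ s) (hK : 3 * s + 1 ≤ K) :
    (K + s) ^ n - (K - 1 - s) ^ n ≤ (1 + 2 * s) * n * 2 ^ n / K * (K - s) ^ n := by
  obtain _ | m := n
  · simp
  push_cast
  have hK0 : 0 < K := by linarith
  have ha : 0 ≤ K + s := by linarith
  have hb : 0 ≤ K - 1 - s := by linarith
  have hmvt : (K + s) ^ (m + 1) - (K - 1 - s) ^ (m + 1) ≤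
      (1 + 2 * s) * (m + 1) * (K + s) ^ m := by
    have h := (le_abs_self _).trans (abs_pow_sub_pow_le (K + s) (K - 1 - s) (m + 1))
    rwa [show K + s - (K - 1 - s) = 1 + 2 * s by ring, abs_of_nonneg (by positivity : 0 ≤ 1 + 2 * s),
      abs_of_nonneg ha, abs_of_nonneg hb, max_eq_left (by linarith), Nat.add_sub_cancel,
      Nat.cast_succ] at h
  have hpow : (K + s) ^ m ≤ 2 ^ m * (K - s) ^ m := by
    rw [← mul_pow]
    exact pow_le_pow_left₀ (by linarith) (by linarith) m
  rw [div_mul_eq_mul_div, le_div_iff₀ hK0]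
  calc ((K + s) ^ (m + 1) - (K - 1 - s) ^ (m + 1)) * K
      ≤ (1 + 2 * s) * (m + 1) * (2 ^ m * (K - s) ^ m) * K := by
        gcongr
        exact hmvt.trans (by gcongr)
    _ ≤ (1 + 2 * s) * (m + 1) * (2 ^ m * (K - s) ^ m) * (2 * (K - s)) := by
        have : 0 ≤ K - s := by linarith
        gcongr
        linarith
    _ = _ := by ring

lemma abs_mul_card_filter_natCast_eq_sub_le {m : ℕ} [NeZero m] (c : ZMod m) (M : ℕ) :
    |(m : ℤ) * ((Finset.range M).filter fun s : ℕ => (s : ZMod m) = c).card - M| ≤ m := by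
  have hcount : ((Finset.range M).filter fun s : ℕ => (s : ZMod m) = c).card =
      M.count (· ≡ c.val [MOD m]) := by
    rw [Nat.count_eq_card_filter_range]
    congr 1
    refine Finset.filter_congr fun s _ => ?_
    rw [← ZMod.natCast_eq_natCast_iff, ZMod.natCast_zmod_val]
  rw [hcount]
  set v := c.val % m
  have hm : (0 : ℚ) < m := by exact_mod_cast NeZero.pos m
  have hv : (v : ℚ) < m := by exact_mod_cast Nat.mod_lt _ (NeZero.pos m)
  have h1 := Int.le_ceil (((M : ℚ) - v) / m)
  have h2 := Int.ceil_lt_add_one (((M : ℚ) - v) / m)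
  rw [← Nat.count_modEq_card_eq_ceil M (NeZero.pos m) c.val] at h1 h2
  rw [div_le_iff₀ hm] at h1
  rw [← sub_lt_iff_lt_add, lt_div_iff₀ hm] at h2
  push_cast at h1 h2
  rw [abs_le]
  constructor <;> qify <;> linarith [Nat.cast_nonneg (α := ℚ) v]

lemma card_filter_range_succ {P : ℕ → Prop} [DecidablePred P] {T : ℕ} (h0 : ¬P 0) (hT : ¬P T) :
    ((Finset.range T).filter fun t => P (t + 1)).card = ((Finset.range T).filter P).card := by
  have h1 := Finset.sum_range_succ' (fun t => if P t then 1 else 0) T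
  have h2 := Finset.sum_range_succ (fun t => if P t then 1 else 0) T
  simp only [h0, hT, if_false, add_zero] at h1 h2
  rw [Finset.card_filter, Finset.card_filter, ← h1, h2]

lemma card_filter_range_not_and_succ {P : ℕ → Prop} [DecidablePred P] {T : ℕ}
    (hmono : ∀ t < T, P t → P (t + 1)) (h0 : ¬P 0) (hT : P T) :
    ((Finset.range T).filter fun t => ¬P t ∧ P (t + 1)).card = 1 := by
  have hterm : ∀ t ∈ Finset.range T, ((if ¬P t ∧ P (t + 1) then 1 else 0 : ℕ) : ℤ) =
      (if P (t + 1) then 1 else 0) - (if P t then 1 else 0) := fun t ht => by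
    have := hmono t (Finset.mem_range.1 ht)
    split_ifs <;> simp_all
  have : (((Finset.range T).filter fun t => ¬P t ∧ P (t + 1)).card : ℤ) = 1 := by
    rw [Finset.card_filter, Nat.cast_sum, Finset.sum_congr rfl hterm,
      Finset.sum_range_sub (fun t => if P t then (1 : ℤ) else 0)]
    simp [h0, hT]
  exact_mod_cast this

section Lattice
open MeasureTheory
variable {d : ℕ}

def rev (j : Fin d × Bool) : Fin d × Bool := (j.1, !j.2)

@[simp] lemma rev_rev (j : Fin d × Bool) : rev (rev j) = j := by
  simp [rev]

lemma nbr_eq_add (x : Vd d) (j : Fin d × Bool) : nbr x j = x + nbr 0 j := by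
  unfold nbr; split <;> abel

@[simp] lemma nbr_nbr_rev (x : Vd d) (j : Fin d × Bool) : nbr (nbr x j) (rev j) = x := by
  obtain ⟨i, _ | _⟩ := j <;> simp [nbr, rev]

lemma nbr_ne_self (x : Vd d) (j : Fin d × Bool) : nbr x j ≠ x := by
  obtain ⟨i, _ | _⟩ := j <;> simp [nbr, sub_eq_self, Pi.single_eq_zero_iff]

lemma nbr_injective (x : Vd d) : Function.Injective (nbr x) := by
  rintro ⟨i, b⟩ ⟨i', b'⟩ h
  have hi := congrFun h i
  have hi' := congrFun h i'
  by_cases hii' : i = i'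
  · subst hii'
    cases b <;> cases b' <;> simp_all [nbr] <;> omega
  · cases b <;> cases b' <;> simp [nbr, hii'] at hi

lemma inorm2_nbr_sub_self (x : Vd d) (j : Fin d × Bool) : inorm2 (nbr x j - x) = 1 := by
  obtain ⟨i, _ | _⟩ := j <;> simp [nbr, inorm2, Pi.single_apply]

def boundaryEdges (B : Finset (Vd d)) : Finset (Vd d × (Fin d × Bool)) :=
  (B ×ˢ Finset.univ).filter fun p => nbr p.1 p.2 ∉ B

/-- Each edge inside `B` cancels against its reversal. -/
lemma sum_sub_rev_eq_sum_boundaryEdges {M : Type*} [AddCommGroup M]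
    (B : Finset (Vd d)) (g : Vd d → Fin d × Bool → M) :
    ∑ p ∈ B ×ˢ Finset.univ, (g p.1 p.2 - g (nbr p.1 p.2) (rev p.2)) =
      ∑ p ∈ boundaryEdges B, (g p.1 p.2 - g (nbr p.1 p.2) (rev p.2)) := by
  rw [← Finset.sum_filter_add_sum_filter_not _ (fun p => nbr p.1 p.2 ∈ B), boundaryEdges,
    add_eq_right]
  refine Finset.sum_involution (fun p _ => (nbr p.1 p.2, rev p.2)) ?_ ?_ ?_ ?_
  · intro p _
    simp
  · intro p _ _ h
    exact nbr_ne_self p.1 p.2 (congrArg Prod.fst h)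
  · intro p hp
    simp_all
  · intro p _
    simp

lemma mem_dball {x y : Vd d} {k : ℕ} : y ∈ dball x k ↔ inorm2 (y - x) < k ^ 2 := by
  refine ⟨fun hy => (Finset.mem_filter.1 hy).2, fun hy => Finset.mem_filter.2 ⟨?_, hy⟩⟩
  have hcoord i : -(k : ℤ) < y i - x i ∧ y i - x i < k := by
    refine abs_lt_of_sq_lt_sq' (lt_of_le_of_lt ?_ hy) k.cast_nonneg
    exact Finset.single_le_sum (f := fun i => (y - x) i ^ 2) (fun _ _ => sq_nonneg _)
      (Finset.mem_univ i)
  refine Finset.mem_Icc.2 ⟨fun i => ?_, fun i => ?_⟩ <;> simp <;> linarith [hcoord i]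

def latticeToEuclidean (y : Vd d) : EuclideanSpace ℝ (Fin d) := WithLp.toLp 2 fun i => (y i : ℝ)

local notation "ι" => latticeToEuclidean

lemma dist_latticeToEuclidean_sq (y z : Vd d) : dist (ι y) (ι z) ^ 2 = inorm2 (y - z) := by
  rw [EuclideanSpace.dist_eq, Real.sq_sqrt (by positivity), inorm2]
  push_cast
  simp [latticeToEuclidean, Real.dist_eq, sq_abs]

lemma mem_dball_iff_dist {x y : Vd d} {k : ℕ} : y ∈ dball x k ↔ dist (ι y) (ι x) < k := by
  rw [← pow_lt_pow_iff_left₀ dist_nonneg k.cast_nonneg two_ne_zero, dist_latticeToEuclidean_sq,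
    mem_dball]
  norm_cast

lemma self_mem_dball (x : Vd d) {k : ℕ} (hk : 0 < k) : x ∈ dball x k := by
  simpa [mem_dball_iff_dist] using hk

lemma dball_mono (x : Vd d) {k l : ℕ} (hkl : k ≤ l) : dball x k ⊆ dball x l := fun _ hy =>
  mem_dball_iff_dist.2 ((mem_dball_iff_dist.1 hy).trans_le (by exact_mod_cast hkl))

lemma dball_add (x v : Vd d) (k : ℕ) :
    dball (x + v) k = (dball x k).map (Equiv.addRight v).toEmbedding := by
  ext y
  rw [Finset.mem_map_equiv, mem_dball, mem_dball, Equiv.addRight_symm, Equiv.coe_addRight,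
    show y + -v - x = y - (x + v) by abel]

lemma nbr_mem_dball_succ {x y : Vd d} {k : ℕ} (hy : y ∈ dball x k) (j : Fin d × Bool) :
    nbr y j ∈ dball x (k + 1) := by
  rw [mem_dball_iff_dist] at hy ⊢
  have hstep : dist (ι (nbr y j)) (ι y) = 1 := by
    rw [← pow_eq_one_iff_of_nonneg dist_nonneg two_ne_zero, dist_latticeToEuclidean_sq,
      inorm2_nbr_sub_self, Int.cast_one]
  calc _ ≤ dist (ι (nbr y j)) (ι y) + dist (ι y) (ι x) := dist_triangle _ _ _
    _ < 1 + k := by linarith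
    _ = _ := by push_cast; ring

lemma Sk_nbr (k : ℕ) (f : Vd d → ℝ) (x : Vd d) (j : Fin d × Bool) :
    Sk k f (nbr x j) = (∑ y ∈ dball x k, f (nbr y j)) / (dball x k).card := by
  simp only [Sk, nbr_eq_add x, dball_add, Finset.sum_map, Finset.card_map]
  simp [← nbr_eq_add]

lemma lapd_Sk (k : ℕ) (f : Vd d → ℝ) (x : Vd d) :
    lapd (Sk k f) x = (∑ y ∈ dball x k, lapd f y) / (dball x k).card := by
  simp_rw [lapd, Sk_nbr]
  simp only [Sk, ← sub_div, ← Finset.sum_div, ← Finset.sum_sub_distrib]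
  rw [Finset.sum_comm]

lemma card_boundaryEdges_dball_le (x : Vd d) (k : ℕ) :
    (boundaryEdges (dball x (k + 1))).card ≤ 2 * d * (dball x (k + 1) \ dball x k).card := by
  have hsub : boundaryEdges (dball x (k + 1)) ⊆ (dball x (k + 1) \ dball x k) ×ˢ Finset.univ := by
    intro p hp
    simp only [boundaryEdges, Finset.mem_filter, Finset.mem_product] at hp
    simp only [Finset.mem_product, Finset.mem_sdiff, Finset.mem_univ, and_true]
    exact ⟨hp.1.1, fun hk => hp.2 (nbr_mem_dball_succ hk p.2)⟩
  calc _ ≤ ((dball x (k + 1) \ dball x k) ×ˢ (Finset.univ : Finset (Fin d × Bool))).card :=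
        Finset.card_le_card hsub
    _ = _ := by simp [Finset.card_product, mul_comm]

def cell (y : Vd d) : Set (EuclideanSpace ℝ (Fin d)) :=
  (MeasurableEquiv.toLp 2 (Fin d → ℝ)).symm ⁻¹' Set.univ.pi fun i => Set.Ico (y i : ℝ) (y i + 1)

lemma mem_cell_iff {y : Vd d} {z : EuclideanSpace ℝ (Fin d)} : z ∈ cell y ↔ ∀ i, ⌊z i⌋ = y i := by
  simp only [cell, Set.mem_preimage, Set.mem_univ_pi, Set.mem_Ico, Int.floor_eq_iff]
  rfl

lemma measurableSet_cell (y : Vd d) : MeasurableSet (cell y) :=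
  (MeasurableEquiv.toLp 2 (Fin d → ℝ)).symm.measurable
    (MeasurableSet.univ_pi fun _ => measurableSet_Ico)

lemma volume_cell (y : Vd d) : volume (cell y) = 1 := by
  rw [cell, (EuclideanSpace.volume_preserving_symm_measurableEquiv_toLp (Fin d)).measure_preimage
    (MeasurableSet.univ_pi fun _ => measurableSet_Ico).nullMeasurableSet, volume_pi_pi]
  simp

lemma pairwiseDisjoint_cell (s : Set (Vd d)) : s.PairwiseDisjoint cell := by
  intro y _ y' _ hyy'
  refine Set.disjoint_left.2 fun z hz hz' => hyy' (funext fun i => ?_)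
  rw [← mem_cell_iff.1 hz i, mem_cell_iff.1 hz' i]

lemma volume_biUnion_cell (s : Finset (Vd d)) : volume (⋃ y ∈ s, cell y) = s.card := by
  rw [measure_biUnion_finset (pairwiseDisjoint_cell _) fun y _ => measurableSet_cell y]
  simp [volume_cell]

lemma dist_le_of_mem_cell {y : Vd d} {z : EuclideanSpace ℝ (Fin d)} (hz : z ∈ cell y) :
    dist z (ι y) ≤ √d := by
  rw [EuclideanSpace.dist_eq]
  refine Real.sqrt_le_sqrt ((Finset.sum_le_card_nsmul _ _ 1 fun i _ => ?_).trans_eq (by simp))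
  have hfloor := mem_cell_iff.1 hz i
  have h0 : (y i : ℝ) ≤ z i := hfloor ▸ Int.floor_le (z i)
  have h1 : z i < y i + 1 := hfloor ▸ Int.lt_floor_add_one (z i)
  rw [Real.dist_eq, sq_abs]
  simp only [latticeToEuclidean]
  nlinarith

noncomputable def unitBallVolume (d : ℕ) : ℝ :=
  (volume (Metric.ball (0 : EuclideanSpace ℝ (Fin d)) 1)).toReal

lemma volume_ball_toReal (hd : 0 < d) (c : EuclideanSpace ℝ (Fin d)) {r : ℝ} (hr : 0 ≤ r) :
    (volume (Metric.ball c r)).toReal = r ^ d * unitBallVolume d := by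
  have : Nonempty (Fin d) := ⟨⟨0, hd⟩⟩
  rw [Measure.addHaar_ball _ _ hr, ENNReal.toReal_mul, ENNReal.toReal_ofReal (by positivity),
    finrank_euclideanSpace_fin, unitBallVolume]

lemma card_dball_le (hd : 0 < d) (x : Vd d) (k : ℕ) :
    ((dball x k).card : ℝ) ≤ (k + √d) ^ d * unitBallVolume d := by
  rw [← volume_ball_toReal hd (ι x) (by positivity), ← ENNReal.toReal_natCast,
    ← volume_biUnion_cell]
  refine ENNReal.toReal_mono measure_ball_lt_top.ne (measure_mono fun z hz => ?_)
  obtain ⟨y, hy, hzy⟩ := Set.mem_iUnion₂.1 hz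
  rw [Metric.mem_ball]
  calc dist z (ι x) ≤ dist z (ι y) + dist (ι y) (ι x) := dist_triangle _ _ _
    _ < √d + k := add_lt_add_of_le_of_lt (dist_le_of_mem_cell hzy) (mem_dball_iff_dist.1 hy)
    _ = k + √d := add_comm _ _

lemma le_card_dball (hd : 0 < d) (x : Vd d) {k : ℕ} (hk : √d ≤ k) :
    (k - √d) ^ d * unitBallVolume d ≤ (dball x k).card := by
  rw [← volume_ball_toReal hd (ι x) (sub_nonneg.2 hk), ← ENNReal.toReal_natCast (dball x k).card,
    ← volume_biUnion_cell]
  refine ENNReal.toReal_mono (by simp [volume_biUnion_cell]) (measure_mono fun z hz => ?_)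
  have hz' : z ∈ cell fun i => ⌊z i⌋ := mem_cell_iff.2 fun _ => rfl
  refine Set.mem_iUnion₂.2 ⟨_, mem_dball_iff_dist.2 ?_, hz'⟩
  calc _ ≤ dist (ι fun i => ⌊z i⌋) z + dist z (ι x) := dist_triangle _ _ _
    _ < √d + (k - √d) := by
        rw [dist_comm]
        exact add_lt_add_of_le_of_lt (dist_le_of_mem_cell hz') (Metric.mem_ball.1 hz)
    _ = k := by ring

lemma card_dball_succ_sdiff_le (hd : 0 < d) (x : Vd d) {k : ℕ} (hk : 4 * d ≤ k) :
    ((dball x (k + 1) \ dball x k).card : ℝ) ≤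
      (1 + 2 * √d) * d * 2 ^ d / (k + 1) * (dball x (k + 1)).card := by
  have hsd : √d ≤ d := Real.sqrt_le_self_iff.2 (Or.inr (by exact_mod_cast hd))
  have hkR : 4 * d ≤ (k : ℝ) := by exact_mod_cast hk
  have hV : 0 ≤ unitBallVolume d := ENNReal.toReal_nonneg
  rw [Finset.card_sdiff_of_subset (dball_mono x k.le_succ),
    Nat.cast_sub (Finset.card_le_card (dball_mono x k.le_succ))]
  have hupper := card_dball_le hd x (k + 1)
  have hinner := le_card_dball hd x (k := k) (by linarith)
  have houter := le_card_dball hd x (k := k + 1) (by push_cast; linarith)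
  have hpow := pow_sub_pow_le_div_mul_pow (K := k + 1) d (Real.sqrt_nonneg d) (by linarith)
  push_cast at hupper houter
  calc _ ≤ ((k + 1 + √d) ^ d - (k + 1 - 1 - √d) ^ d) * unitBallVolume d := by
        rw [add_sub_cancel_right]; linarith
    _ ≤ (1 + 2 * √d) * d * 2 ^ d / (k + 1) * (k + 1 - √d) ^ d * unitBallVolume d := by
        gcongr
    _ ≤ _ := by
        rw [mul_assoc]
        gcongr

lemma exists_card_dball_succ_sdiff_le (hd : 0 < d) :
    ∃ C : ℝ, ∀ (x : Vd d) (k : ℕ),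
      ((dball x (k + 1) \ dball x k).card : ℝ) ≤ C / (k + 1) * (dball x (k + 1)).card := by
  refine ⟨max ((1 + 2 * √d) * d * 2 ^ d) (4 * d), fun x k => ?_⟩
  rcases le_or_gt (4 * d) k with hk | hk
  · exact (card_dball_succ_sdiff_le hd x hk).trans (by gcongr; exact le_max_left _ _)
  · calc ((dball x (k + 1) \ dball x k).card : ℝ) ≤ (dball x (k + 1)).card := by
          exact_mod_cast Finset.card_le_card Finset.sdiff_subset
      _ ≤ 4 * d / (k + 1) * (dball x (k + 1)).card := by
          refine le_mul_of_one_le_left (by positivity) ((one_le_div (by positivity)).2 ?_)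
          exact_mod_cast hk
      _ ≤ _ := by gcongr; exact le_max_right _ _

end Lattice

namespace RStep
variable {c c' : RConf d}

lemma eq_of_mem_occ (h : RStep mech c c') {p : Vd d} (hw : c.walker = some p) (hp : p ∈ c.occ) :
    c' = ⟨Function.update c.rotors p (c.rotors p + 1), c.occ,
      some (nbr p (mech p (c.rotors p + 1)))⟩ := by
  cases h <;> simp_all

lemma eq_of_notMem_occ (h : RStep mech c c') {p : Vd d} (hw : c.walker = some p)
    (hp : p ∉ c.occ) : c' = ⟨c.rotors, insert p c.occ, none⟩ := by
  cases h <;> simp_all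

lemma occ_subset (h : RStep mech c c') : c.occ ⊆ c'.occ := by
  cases h <;> simp [Finset.subset_insert]

lemma rotors_of_not_exit (h : RStep mech c c') {x : Vd d}
    (hx : ¬(c.walker = some x ∧ x ∈ c.occ)) : c'.rotors x = c.rotors x := by
  cases h with
  | move p hw hp => exact Function.update_of_ne (by rintro rfl; exact hx ⟨hw, hp⟩) _ _
  | _ => rfl

lemma walker_eq_of_notMem_of_mem (h : RStep mech c c') {x : Vd d} (hx : x ∉ c.occ)
    (hx' : x ∈ c'.occ) : c.walker = some x := by
  cases h <;> aesop

lemma exists_walker_eq_nbr (h : RStep mech c c') {x : Vd d} (hx : c'.walker = some x)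
    (hx0 : x ≠ 0) : ∃ j, c.walker = some (nbr x j) ∧ nbr x j ∈ c.occ := by
  cases h with
  | launch _ => simp_all [eq_comm]
  | settle _ _ _ => simp_all
  | move p hw hp =>
    simp only [Option.some.injEq] at hx
    exact ⟨rev (mech p (c.rotors p + 1)), by simp [← hx, hw, hp]⟩

end RStep

namespace RotorExec
variable (E : RotorExec d n mech r₀)

def exits (x : Vd d) (i : ℕ) : ℕ :=
  ((Finset.range i).filter fun t => (E.conf t).walker = some x ∧ x ∈ (E.conf t).occ).card

lemma u_eq_exits (x : Vd d) : E.u x = E.exits x E.T := rfl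

lemma exits_succ (x : Vd d) (i : ℕ) :
    E.exits x (i + 1) =
      E.exits x i + if (E.conf i).walker = some x ∧ x ∈ (E.conf i).occ then 1 else 0 := by
  simp only [exits, Finset.card_filter, Finset.sum_range_succ]

lemma rotors_conf (x : Vd d) {i : ℕ} (hi : i ≤ E.T) :
    (E.conf i).rotors x = r₀ x + E.exits x i := by
  induction i with
  | zero => simp [E.init, exits]
  | succ i ih =>
    have hstep := E.step i hi
    rw [E.exits_succ, Nat.cast_add, ← add_assoc, ← ih (by omega)]
    split_ifs with hx
    · simp [hstep.eq_of_mem_occ hx.1 hx.2]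
    · simp [hstep.rotors_of_not_exit hx]

lemma walker_succ_of_exit {x : Vd d} {t : ℕ} (ht : t < E.T) (hw : (E.conf t).walker = some x)
    (hx : x ∈ (E.conf t).occ) :
    (E.conf (t + 1)).walker = some (nbr x (mech x (r₀ x + E.exits x t + 1))) := by
  simp [(E.step t ht).eq_of_mem_occ hw hx, E.rotors_conf x ht.le]

/-- The `s`-th exit from `x` is the only exit `t` with `E.exits x t = s`. -/
lemma card_filter_exits (x : Vd d) (P : ℕ → Prop) [DecidablePred P] (i : ℕ) :
    ((Finset.range i).filter fun t =>
        ((E.conf t).walker = some x ∧ x ∈ (E.conf t).occ) ∧ P (E.exits x t)).card =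
      ((Finset.range (E.exits x i)).filter P).card := by
  induction i with
  | zero => rfl
  | succ i ih =>
    rw [Finset.range_add_one, Finset.filter_insert, E.exits_succ]
    split_ifs with h₁ h₂ h₂ <;>
      simp_all [Finset.range_add_one, Finset.filter_insert, Finset.card_insert_of_notMem]

lemma N_eq_card_filter (x z : Vd d) :
    E.N x z =
      ((Finset.range (E.u x)).filter fun s : ℕ => nbr x (mech x (r₀ x + s + 1)) = z).card := by
  rw [u_eq_exits, ← E.card_filter_exits, N]
  congr 1
  refine Finset.filter_congr fun t ht => ?_
  rw [← and_assoc]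
  refine and_congr_right fun hexit => ?_
  rw [E.walker_succ_of_exit (Finset.mem_range.1 ht) hexit.1 hexit.2, Option.some_inj]

lemma sum_N_nbr (x : Vd d) : ∑ j, E.N x (nbr x j) = E.u x := by
  simp_rw [N_eq_card_filter, (nbr_injective x).eq_iff]
  rw [← Finset.card_eq_sum_card_fiberwise fun _ _ => Finset.mem_univ _, Finset.card_range]

/-- A simple rotor sends the exits from `x` round-robin over its `2d` neighbours. -/
lemma abs_two_mul_N_nbr_sub_u_le (hs : SimpleMech mech) (x : Vd d) (j : Fin d × Bool) :
    |2 * d * (E.N x (nbr x j) : ℤ) - E.u x| ≤ 2 * d := by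
  have : NeZero (2 * d) := ⟨by have := j.1.pos; omega⟩
  let e := Equiv.ofBijective (mech x) (hs x)
  have hN : E.N x (nbr x j) = ((Finset.range (E.u x)).filter
      fun s : ℕ => (s : ZMod (2 * d)) = e.symm j - r₀ x - 1).card := by
    rw [N_eq_card_filter]
    congr 1
    refine Finset.filter_congr fun s _ => ?_
    rw [(nbr_injective x).eq_iff]
    change e _ = j ↔ _
    rw [← e.eq_symm_apply]
    constructor <;> intro h <;> linear_combination h
  have := abs_mul_card_filter_natCast_eq_sub_le (e.symm j - r₀ x - 1) (E.u x)
  rw [hN]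
  exact_mod_cast this

lemma card_settle {x : Vd d} (hx : x ∈ E.cluster) :
    ((Finset.range E.T).filter fun t =>
      (E.conf t).walker = some x ∧ x ∉ (E.conf t).occ).card = 1 := by
  rw [← card_filter_range_not_and_succ (P := fun t => x ∈ (E.conf t).occ)
    (fun t ht hx => (E.step t ht).occ_subset hx) (by simp [E.init]) hx]
  congr 1
  refine Finset.filter_congr fun t ht => ⟨fun ⟨hw, hxt⟩ => ⟨hxt, ?_⟩, fun ⟨hxt, hxt'⟩ => ?_⟩
  · simp [(E.step t (Finset.mem_range.1 ht)).eq_of_notMem_occ hw hxt]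
  · exact ⟨(E.step t (Finset.mem_range.1 ht)).walker_eq_of_notMem_of_mem hxt hxt', hxt⟩

lemma card_visits {x : Vd d} (hx : x ∈ E.cluster) :
    ((Finset.range E.T).filter fun t => (E.conf t).walker = some x).card = E.u x + 1 := by
  rw [← Finset.card_filter_add_card_filter_not (p := fun t => x ∈ (E.conf t).occ),
    Finset.filter_filter, Finset.filter_filter, ← E.card_settle hx]
  rfl

lemma card_arrivals (x : Vd d) :
    ((Finset.range E.T).filter fun t => (E.conf (t + 1)).walker = some x).card =
      ((Finset.range E.T).filter fun t => (E.conf t).walker = some x).card :=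
  card_filter_range_succ (P := fun t => (E.conf t).walker = some x) (by simp [E.init])
    (by simp [E.walker_final])

lemma sum_N_nbr_left {x : Vd d} (hx0 : x ≠ 0) :
    ∑ j, E.N (nbr x j) x =
      ((Finset.range E.T).filter fun t => (E.conf (t + 1)).walker = some x).card := by
  simp only [N]
  rw [← Finset.card_biUnion]
  · congr 1
    ext t
    simp only [Finset.mem_biUnion, Finset.mem_filter, Finset.mem_univ, true_and]
    constructor
    · rintro ⟨j, ht, -, -, hw⟩
      exact ⟨ht, hw⟩
    · rintro ⟨ht, hw⟩
      obtain ⟨j, hj⟩ := (E.step t (Finset.mem_range.1 ht)).exists_walker_eq_nbr hw hx0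
      exact ⟨j, ht, hj.1, hj.2, hw⟩
  · intro j _ j' _ hjj'
    refine Finset.disjoint_left.2 fun t ht ht' => hjj' (nbr_injective x ?_)
    exact Option.some_injective _ (((Finset.mem_filter.1 ht).2.1).symm.trans
      (Finset.mem_filter.1 ht').2.1)

lemma sum_theta_nbr {x : Vd d} (hx : x ∈ E.cluster) (hx0 : x ≠ 0) :
    ∑ j, E.theta (nbr x j) x = 1 := by
  simp only [theta, Finset.sum_sub_distrib]
  rw [← Nat.cast_sum, ← Nat.cast_sum, sum_N_nbr, E.sum_N_nbr_left hx0, card_arrivals,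
    E.card_visits hx]
  push_cast
  ring

def exitDefect (y : Vd d) (j : Fin d × Bool) : ℝ := 2 * d * E.N y (nbr y j) - E.u y

lemma abs_exitDefect_le (hs : SimpleMech mech) (y : Vd d) (j : Fin d × Bool) :
    |E.exitDefect y j| ≤ 2 * d := by
  unfold exitDefect
  exact_mod_cast E.abs_two_mul_N_nbr_sub_u_le hs y j

lemma u_nbr_sub_u (y : Vd d) (j : Fin d × Bool) :
    (E.u (nbr y j) : ℝ) - E.u y =
      2 * d * E.theta (nbr y j) y + E.exitDefect y j - E.exitDefect (nbr y j) (rev j) := by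
  simp only [exitDefect, theta, nbr_nbr_rev]
  push_cast
  ring

lemma lapd_u {y : Vd d} (hy : y ∈ E.cluster) (hy0 : y ≠ 0) :
    lapd (fun z => (E.u z : ℝ)) y =
      2 * d + ∑ j, (E.exitDefect y j - E.exitDefect (nbr y j) (rev j)) := by
  have htheta : ∑ j, (E.theta (nbr y j) y : ℝ) = 1 := by exact_mod_cast E.sum_theta_nbr hy hy0
  simp only [lapd, u_nbr_sub_u, add_sub_assoc, Finset.sum_add_distrib, ← Finset.mul_sum, htheta,
    mul_one]

lemma abs_sum_lapd_u_sub_le (hs : SimpleMech mech) (B : Finset (Vd d))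
    (hB : ∀ y ∈ B, y ∈ E.cluster ∧ y ≠ 0) :
    |∑ y ∈ B, lapd (fun z => (E.u z : ℝ)) y - 2 * d * B.card| ≤
      4 * d * (boundaryEdges B).card := by
  rw [Finset.sum_congr rfl fun y hy => E.lapd_u (hB y hy).1 (hB y hy).2, Finset.sum_add_distrib,
    Finset.sum_const, nsmul_eq_mul, mul_comm, add_sub_cancel_left, ← Finset.sum_product',
    sum_sub_rev_eq_sum_boundaryEdges]
  calc _ ≤ ∑ p ∈ boundaryEdges B, |E.exitDefect p.1 p.2 - E.exitDefect (nbr p.1 p.2) (rev p.2)| :=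
        Finset.abs_sum_le_sum_abs _ _
    _ ≤ ∑ p ∈ boundaryEdges B, (4 * d : ℝ) := Finset.sum_le_sum fun p _ => by
        linarith [abs_sub (E.exitDefect p.1 p.2) (E.exitDefect (nbr p.1 p.2) (rev p.2)),
          E.abs_exitDefect_le hs p.1 p.2, E.abs_exitDefect_le hs (nbr p.1 p.2) (rev p.2)]
    _ = _ := by rw [Finset.sum_const, nsmul_eq_mul, mul_comm]

end RotorExec

/-- Smoothing lemma: there is a constant `C = C(d)` such that for any rotor aggregation
with a simple mechanism, any `k > 1`, and any `x` whose lattice ball `B(x,k)` is contained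
in `Rₙ ∖ {0}`, the smoothed odometer satisfies `|(1/2d)Δ(Sₖu)(x) − 1| ≤ C/k`. -/
theorem smoothed_odometer_laplacian (d : ℕ) (hd : 0 < d) :
    ∃ C : ℝ, ∀ (n : ℕ) (mech : Vd d → ZMod (2 * d) → Fin d × Bool)
      (r₀ : Vd d → ZMod (2 * d)), SimpleMech mech →
      ∀ (E : RotorExec d n mech r₀) (k : ℕ), 1 < k →
      ∀ x : Vd d, (∀ y ∈ dball x k, y ∈ E.cluster ∧ y ≠ 0) →
      |(1 / (2 * d)) * lapd (Sk k (fun z => (E.u z : ℝ))) x - 1| ≤ C / k := by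
  obtain ⟨C, hC⟩ := exists_card_dball_succ_sdiff_le hd
  refine ⟨4 * d * C, fun n mech r₀ hs E k hk x hball => ?_⟩
  obtain ⟨m, rfl⟩ : ∃ m, k = m + 1 := ⟨k - 1, by omega⟩
  set B := dball x (m + 1)
  have hB : (0 : ℝ) < B.card := by
    exact_mod_cast Finset.card_pos.2 ⟨x, self_mem_dball x m.succ_pos⟩
  have hden : (0 : ℝ) < 2 * d * B.card := by positivity
  have hbdry : ((boundaryEdges B).card : ℝ) ≤ 2 * d * (B \ dball x m).card := by
    exact_mod_cast card_boundaryEdges_dball_le x m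
  rw [lapd_Sk, show ∀ S : ℝ, 1 / (2 * d) * (S / B.card) - 1 =
      (S - 2 * d * B.card) / (2 * d * B.card) from fun S => by field_simp [hB.ne'],
    abs_div, abs_of_pos hden, div_le_iff₀ hden]
  calc _ ≤ 4 * d * ((boundaryEdges B).card : ℝ) := E.abs_sum_lapd_u_sub_le hs B hball
    _ ≤ 4 * d * (2 * d * (C / (m + 1) * B.card)) := by
        gcongr
        exact hbdry.trans (by gcongr; exact hC x m)
    _ = _ := by push_cast; ring
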